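/- The k-ray P_{k∞} (k rays glued at a common endpoint) is self-embeddable if and only if k = 1. Consequently, a (P_{k∞}, K₂)-minimal graph exists if and only if k > 1. -/

import Mathlib

open SimpleGraph

/-- `G` embeds into `H`: an injective graph homomorphism (not necessarily induced). -/
def EmbedsIn {α β : Type*} (G : SimpleGraph α) (H : SimpleGraph β) : Prop :=
  ∃ f : G →g H, Function.Injective f

/-- `G` is self-embeddable: it admits an injective adjacency-preserving self-map whose
image, as a subgraph, is a proper subgraph (strictly smaller edge set). -/
def SelfEmbeddable {α : Type*} (G : SimpleGraph α) : Prop :=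
  ∃ f : G →g G, Function.Injective f ∧ Sym2.map f '' G.edgeSet ⊂ G.edgeSet

/-- `G` is strongly self-embeddable: `G` embeds into `G - v` for every vertex `v`. -/
def StronglySelfEmbeddable {α : Type*} (G : SimpleGraph α) : Prop :=
  ∀ v : α, EmbedsIn G (G.induce ({v}ᶜ : Set α))

/-- The subgraph of `F` consisting of the edges with color `b` under coloring `c`. -/
def colorSubgraph {α : Type*} (F : SimpleGraph α) (c : Sym2 α → Bool) (b : Bool) :
    SimpleGraph α where
  Adj x y := F.Adj x y ∧ c s(x, y) = b
  symm := ⟨by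
    intro x y h
    exact ⟨h.1.symm, by rw [Sym2.eq_swap]; exact h.2⟩⟩
  loopless := ⟨by intro x h; exact F.irrefl h.1⟩

/-- `F → (G, H)` : every red-blue coloring of the edges of `F` yields a red copy of `G`
or a blue copy of `H` (here `true` = red, `false` = blue). -/
def Arrows {α β γ : Type*} (F : SimpleGraph α) (G : SimpleGraph β) (H : SimpleGraph γ) : Prop :=
  ∀ c : Sym2 α → Bool,
    EmbedsIn G (colorSubgraph F c true) ∨ EmbedsIn H (colorSubgraph F c false)

/-- `F` is `(G,H)`-minimal: it arrows `(G,H)` but no proper subgraph of it does. -/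
def RamseyMinimal {α β γ : Type*} (F : SimpleGraph α) (G : SimpleGraph β)
    (H : SimpleGraph γ) : Prop :=
  Arrows F G H ∧ ∀ F' : SimpleGraph α, F' < F → ¬ Arrows F' G H

/-- `G` has no isolated vertices. -/
def NoIsolated {α : Type*} (G : SimpleGraph α) : Prop := ∀ v, ∃ w, G.Adj v w

/-- The single-edge graph `K₂`. -/
def K2 : SimpleGraph (Fin 2) := ⊤

/-- The matching `nK₂` with `n` pairwise disjoint edges. -/
def Matching (n : ℕ) : SimpleGraph (Fin n × Fin 2) where
  Adj a b := a.1 = b.1 ∧ a.2 ≠ b.2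
  symm := ⟨by intro a b h; exact ⟨h.1.symm, h.2.symm⟩⟩
  loopless := ⟨by intro a h; exact h.2 rfl⟩

/-- The disjoint union `nG` of `n` copies of `G`. -/
def nCopies {V : Type*} (n : ℕ) (G : SimpleGraph V) : SimpleGraph (Fin n × V) where
  Adj a b := a.1 = b.1 ∧ G.Adj a.2 b.2
  symm := ⟨by intro a b h; exact ⟨h.1.symm, h.2.symm⟩⟩
  loopless := ⟨by intro a h; exact G.irrefl h.2⟩

/-- The infinite star `S_∞ = K_{1,∞}`, with center `none`. -/
def InfStar : SimpleGraph (Option ℕ) := SimpleGraph.fromRel (fun a _ => a = none)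

/-- The finite star `K_{1,n}`, with center `none`. -/
def StarN (n : ℕ) : SimpleGraph (Option (Fin n)) := SimpleGraph.fromRel (fun a _ => a = none)

/-- The ray `P_∞` (one-way infinite path) on `ℕ`. -/
def Ray : SimpleGraph ℕ := SimpleGraph.fromRel (fun a b => b = a + 1)

/-- The `k`-ray `P_{k∞}`: `k` rays glued at a common endpoint `none`. -/
def kRay (k : ℕ) : SimpleGraph (Option (Fin k × ℕ)) :=
  SimpleGraph.fromRel (fun a b =>
    (a = none ∧ ∃ i, b = some (i, 0)) ∨ (∃ i n, a = some (i, n) ∧ b = some (i, n + 1)))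

/-!
For `k ≥ 2` every vertex of `P_{k∞}` has finite degree, and an injective endomorphism `f` cannot
lower degrees. For `k ≥ 3` it must therefore fix the centre, the only vertex of degree `k > 2`,
while for `k = 2` all degrees are `2`; either way `deg (f v) = deg v`, so `f` maps every
neighbourhood onto a neighbourhood, and by connectedness it is onto the edges. For `k = 1`, shifting
along the ray misses the centre.

`F → (G, K₂)` just says that `G` embeds in `F`. If a self-embedding of `G` misses the edge `e`,
deleting the image of `e` from an arrowing `F` leaves a copy of `G`, so no `F` is minimal;
if `G` is not self-embeddable, `G` itself is `(G, K₂)`-minimal.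
-/

namespace SimpleGraph.Hom

variable {V W : Type*} {G : SimpleGraph V} {H : SimpleGraph W} (f : G →g H)

lemma ncard_neighborSet_le_of_injective (hf : Function.Injective f) (v : V)
    (hfin : (H.neighborSet (f v)).Finite) :
    (G.neighborSet v).ncard ≤ (H.neighborSet (f v)).ncard :=
  Set.ncard_le_ncard_of_injOn f (fun _ ↦ f.apply_mem_neighborSet) hf.injOn hfin

lemma neighborSet_subset_image_of_ncard_le (hf : Function.Injective f) {v : V}
    (hfin : (H.neighborSet (f v)).Finite)
    (hle : (H.neighborSet (f v)).ncard ≤ (G.neighborSet v).ncard) :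
    H.neighborSet (f v) ⊆ f '' G.neighborSet v :=
  (Set.eq_of_subset_of_ncard_le (Set.image_subset_iff.mpr fun _ ↦ f.apply_mem_neighborSet)
    (by rwa [Set.ncard_image_of_injective _ hf]) hfin).superset

lemma edgeSet_subset_image_of_neighborSet_subset [Nonempty V] (hH : H.Connected)
    (hloc : ∀ v, H.neighborSet (f v) ⊆ f '' G.neighborSet v) :
    H.edgeSet ⊆ Sym2.map f '' G.edgeSet := by
  have walk_range : ∀ {x y : W} (p : H.Walk x y), x ∈ Set.range f → y ∈ Set.range f := by
    intro x y p
    induction p with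
    | nil => exact id
    | cons hadj _ ih =>
      rintro ⟨a, rfl⟩
      obtain ⟨b, -, rfl⟩ := hloc a hadj
      exact ih ⟨b, rfl⟩
  obtain ⟨v⟩ := ‹Nonempty V›
  rintro ⟨x, y⟩ hxy
  obtain ⟨a, rfl⟩ := walk_range (hH.preconnected (f v) x).some ⟨v, rfl⟩
  obtain ⟨b, hab, rfl⟩ := hloc a hxy
  exact ⟨s(a, b), hab, rfl⟩

end SimpleGraph.Hom

section Embeddings

variable {U V W : Type*} {G : SimpleGraph V} {H : SimpleGraph W}

lemma EmbedsIn.refl : EmbedsIn G G := ⟨Hom.id, Function.injective_id⟩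

lemma EmbedsIn.trans {F : SimpleGraph U} (hGH : EmbedsIn G H) (hHF : EmbedsIn H F) :
    EmbedsIn G F :=
  let ⟨f, hf⟩ := hGH
  let ⟨g, hg⟩ := hHF
  ⟨g.comp f, hg.comp hf⟩

lemma EmbedsIn.mono {H' : SimpleGraph W} (h : EmbedsIn G H) (hle : H ≤ H') : EmbedsIn G H' :=
  let ⟨f, hf⟩ := h
  ⟨⟨f, fun hadj ↦ hle (f.map_adj hadj)⟩, hf⟩

lemma embedsIn_deleteEdges_map (f : G →g H) (hf : Function.Injective f) (e : Sym2 V) :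
    EmbedsIn (G.deleteEdges {e}) (H.deleteEdges {e.map f}) := by
  refine ⟨⟨f, fun {a b} hab ↦ ?_⟩, hf⟩
  rw [deleteEdges_adj, Set.mem_singleton_iff] at hab ⊢
  refine ⟨f.map_adj hab.1, fun h ↦ hab.2 (Sym2.map.injective hf ?_)⟩
  rwa [Sym2.map_mk]

lemma embedsIn_K2_iff : EmbedsIn K2 H ↔ ∃ x y, H.Adj x y := by
  refine ⟨fun ⟨f, _⟩ ↦ ⟨f 0, f 1, f.map_adj (by simp [K2])⟩, fun ⟨x, y, hxy⟩ ↦ ?_⟩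
  refine ⟨⟨![x, y], fun {i j} hij ↦ ?_⟩, fun i j (hij : ![x, y] i = ![x, y] j) ↦ ?_⟩ <;>
    fin_cases i <;> fin_cases j <;> simp_all [K2, hxy.ne, hxy.ne', hxy.symm]

lemma arrows_K2_iff (F : SimpleGraph V) (G : SimpleGraph W) :
    Arrows F G K2 ↔ EmbedsIn G F := by
  refine ⟨fun h ↦ ?_, fun hG c ↦ ?_⟩
  · refine (h fun _ ↦ true).resolve_right ?_ |>.mono fun _ _ hadj ↦ hadj.1
    rw [embedsIn_K2_iff]
    rintro ⟨x, y, -, ⟨⟩⟩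
  by_cases hblue : ∃ x y, (colorSubgraph F c false).Adj x y
  · exact .inr (embedsIn_K2_iff.mpr hblue)
  · refine .inl (hG.mono fun x y hxy ↦ ⟨hxy, ?_⟩)
    simpa [colorSubgraph] using fun h ↦ hblue ⟨x, y, hxy, h⟩

lemma selfEmbeddable_iff_exists_embedsIn_deleteEdges :
    SelfEmbeddable G ↔ ∃ e ∈ G.edgeSet, EmbedsIn G (G.deleteEdges {e}) := by
  constructor
  · rintro ⟨f, hf, hss⟩
    obtain ⟨e, he, hne⟩ := Set.exists_of_ssubset hss
    refine ⟨e, he, ⟨f, fun {a b} hab ↦ ?_⟩, hf⟩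
    rw [deleteEdges_adj, Set.mem_singleton_iff]
    exact ⟨f.map_adj hab, fun h ↦ hne ⟨s(a, b), hab, h⟩⟩
  · rintro ⟨e, he, f, hf⟩
    refine ⟨⟨f, fun hab ↦ G.deleteEdges_le _ (f.map_adj hab)⟩, hf, ?_⟩
    refine f.image_edgeSet_subset.trans_ssubset ?_
    rwa [edgeSet_deleteEdges, Set.sdiff_singleton_ssubset]

lemma selfEmbeddable_of_notMem_range (f : G →g G) (hf : Function.Injective f) {v w : V}
    (hvw : G.Adj v w) (hv : v ∉ Set.range f) : SelfEmbeddable G := by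
  refine ⟨f, hf, f.image_edgeSet_subset, fun hsub ↦ hv ?_⟩
  obtain ⟨e, -, he⟩ := hsub (G.mem_edgeSet.mpr hvw)
  obtain ⟨a, -, rfl⟩ := Sym2.mem_map.mp (he ▸ Sym2.mem_mk_left v w)
  exact ⟨a, rfl⟩

end Embeddings

section RamseyMinimal

variable {V W : Type*} {G : SimpleGraph V}

lemma not_ramseyMinimal_K2_of_selfEmbeddable (hG : SelfEmbeddable G) (F : SimpleGraph W) :
    ¬ RamseyMinimal F G K2 := by
  rintro ⟨hF, hmin⟩
  obtain ⟨f, hf⟩ := (arrows_K2_iff F G).mp hF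
  obtain ⟨e, he, hGe⟩ := selfEmbeddable_iff_exists_embedsIn_deleteEdges.mp hG
  have hlt : F.deleteEdges {e.map f} < F := by
    rw [← edgeSet_ssubset_edgeSet, edgeSet_deleteEdges, Set.sdiff_singleton_ssubset]
    exact f.map_mem_edgeSet he
  exact hmin _ hlt ((arrows_K2_iff _ G).mpr (hGe.trans (embedsIn_deleteEdges_map f hf e)))

lemma ramseyMinimal_self_K2 (hG : ¬ SelfEmbeddable G) : RamseyMinimal G G K2 := by
  refine ⟨(arrows_K2_iff G G).mpr .refl, fun F hlt hF ↦ hG ?_⟩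
  obtain ⟨e, he, hne⟩ := Set.exists_of_ssubset (edgeSet_ssubset_edgeSet.mpr hlt)
  refine selfEmbeddable_iff_exists_embedsIn_deleteEdges.mpr ⟨e, he, ?_⟩
  refine ((arrows_K2_iff F G).mp hF).mono fun x y hxy ↦ ?_
  rw [deleteEdges_adj, Set.mem_singleton_iff]
  exact ⟨hlt.le hxy, fun h ↦ hne (h ▸ hxy)⟩

lemma exists_ramseyMinimal_K2_iff {V : Type} (G : SimpleGraph V) :
    (∃ (W : Type) (F : SimpleGraph W), RamseyMinimal F G K2) ↔ ¬ SelfEmbeddable G :=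
  ⟨fun ⟨_, F, hF⟩ hG ↦ not_ramseyMinimal_K2_of_selfEmbeddable hG F hF,
    fun hG ↦ ⟨V, G, ramseyMinimal_self_K2 hG⟩⟩

end RamseyMinimal

section KRay

variable {k : ℕ}

@[simp]
lemma kRay_adj_none_some {i : Fin k} {n : ℕ} : (kRay k).Adj none (some (i, n)) ↔ n = 0 := by
  simp [kRay]

@[simp]
lemma kRay_adj_some_none {i : Fin k} {n : ℕ} : (kRay k).Adj (some (i, n)) none ↔ n = 0 := by
  rw [adj_comm, kRay_adj_none_some]

@[simp]
lemma kRay_adj_some_some {i j : Fin k} {m n : ℕ} :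
    (kRay k).Adj (some (i, m)) (some (j, n)) ↔ i = j ∧ (n = m + 1 ∨ m = n + 1) := by
  simp only [kRay, fromRel_adj]
  constructor
  · rintro ⟨-, (⟨⟨⟩, -⟩ | ⟨_, _, ⟨⟩, ⟨⟩⟩) | (⟨⟨⟩, -⟩ | ⟨_, _, ⟨⟩, ⟨⟩⟩)⟩ <;> simp
  · rintro ⟨rfl, rfl | rfl⟩ <;> simp

lemma kRay_neighborSet_none : (kRay k).neighborSet none = Set.range fun i => some (i, 0) := by
  ext (_ | ⟨i, n⟩) <;> simp [eq_comm]

lemma kRay_neighborSet_some_zero (i : Fin k) :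
    (kRay k).neighborSet (some (i, 0)) = {none, some (i, 1)} := by
  ext (_ | ⟨j, n⟩) <;> simp [eq_comm, and_comm]

lemma kRay_neighborSet_some_succ (i : Fin k) (n : ℕ) :
    (kRay k).neighborSet (some (i, n + 1)) = {some (i, n), some (i, n + 2)} := by
  ext (_ | ⟨j, m⟩) <;> simp [eq_comm, and_comm]
  omega

lemma kRay_neighborSet_finite (v : Option (Fin k × ℕ)) : ((kRay k).neighborSet v).Finite := by
  rcases v with _ | ⟨i, _ | n⟩
  · rw [kRay_neighborSet_none]; exact Set.finite_range _
  · rw [kRay_neighborSet_some_zero]; exact Set.toFinite _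
  · rw [kRay_neighborSet_some_succ]; exact Set.toFinite _

lemma kRay_ncard_neighborSet_none : ((kRay k).neighborSet none).ncard = k := by
  rw [kRay_neighborSet_none, Set.ncard_range_of_injective (by intro i j; simp), Nat.card_fin]

lemma kRay_ncard_neighborSet_some (p : Fin k × ℕ) : ((kRay k).neighborSet (some p)).ncard = 2 := by
  obtain ⟨i, _ | n⟩ := p
  · rw [kRay_neighborSet_some_zero, Set.ncard_pair (by simp)]
  · rw [kRay_neighborSet_some_succ, Set.ncard_pair (by simp)]

lemma kRay_reachable_none (v : Option (Fin k × ℕ)) : (kRay k).Reachable none v := by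
  obtain _ | ⟨i, n⟩ := v
  · rfl
  induction n with
  | zero => exact (kRay_adj_none_some.mpr rfl).reachable
  | succ n ih => exact ih.trans (kRay_adj_some_some.mpr ⟨rfl, Or.inl rfl⟩).reachable

lemma kRay_connected : (kRay k).Connected :=
  (connected_iff_exists_forall_reachable _).mpr ⟨none, kRay_reachable_none⟩

lemma kRay_not_selfEmbeddable (hk : 2 ≤ k) : ¬ SelfEmbeddable (kRay k) := by
  rintro ⟨f, hf, hss⟩
  have hcenter : 3 ≤ k → f none = none := by
    intro hk3
    by_contra h
    obtain ⟨p, hp⟩ := Option.ne_none_iff_exists'.mp h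
    have := f.ncard_neighborSet_le_of_injective hf none (kRay_neighborSet_finite _)
    rw [hp, kRay_ncard_neighborSet_some, kRay_ncard_neighborSet_none] at this
    omega
  have hdeg : ∀ v, ((kRay k).neighborSet (f v)).ncard ≤ ((kRay k).neighborSet v).ncard := by
    intro v
    rcases hfv : f v with _ | q <;> rcases v with _ | p <;>
      simp only [kRay_ncard_neighborSet_none, kRay_ncard_neighborSet_some, le_refl, hk]
    -- left: a ray vertex sent to the centre, impossible once the centre is fixed
    by_contra hk3
    exact absurd (hf (hfv.trans (hcenter (by omega)).symm)) (by simp)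
  refine hss.not_subset (f.edgeSet_subset_image_of_neighborSet_subset kRay_connected fun v ↦ ?_)
  exact f.neighborSet_subset_image_of_ncard_le hf (kRay_neighborSet_finite _) (hdeg v)

def kRayOneShift : kRay 1 →g kRay 1 where
  toFun v := some (0, v.elim 0 (·.2 + 1))
  map_rel' := by
    rintro (_ | ⟨i, m⟩) (_ | ⟨j, n⟩) h <;> simp_all

lemma kRayOneShift_injective : Function.Injective kRayOneShift := by
  rintro (_ | ⟨i, m⟩) (_ | ⟨j, n⟩) h <;> simp_all [kRayOneShift, Fin.fin_one_eq_zero]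

lemma kRay_one_selfEmbeddable : SelfEmbeddable (kRay 1) :=
  selfEmbeddable_of_notMem_range kRayOneShift kRayOneShift_injective
    (kRay_adj_none_some.mpr rfl : (kRay 1).Adj none (some (0, 0))) (by simp [kRayOneShift])

end KRay

/-- The `k`-ray is self-embeddable iff `k = 1`; consequently, a `(P_{k∞}, K₂)`-minimal
graph exists iff `k > 1`. -/
theorem stmt11 (k : ℕ) (hk : 1 ≤ k) :
    (SelfEmbeddable (kRay k) ↔ k = 1) ∧
    ((∃ (W : Type) (F : SimpleGraph W), RamseyMinimal F (kRay k) K2) ↔ 1 < k) := by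
  have hself : SelfEmbeddable (kRay k) ↔ k = 1 := by
    refine ⟨fun h ↦ ?_, by rintro rfl; exact kRay_one_selfEmbeddable⟩
    by_contra hk1
    exact kRay_not_selfEmbeddable (by omega) h
  refine ⟨hself, ?_⟩
  rw [exists_ramseyMinimal_K2_iff, hself]
  omega
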